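/- arXiv:2503.18041 — 3 statements merged into one kernel-verified Lean document; each statement's English description precedes it below -/
import Mathlib

section
/- Let γ ∈ (0,1), K > 0 and M > 0, and set A(t) = K·t^{−γ} for t > 0. Let f : [0,∞) → ℝ be continuous and suppose that for every t > 0 one has f(t) ≤ A(t) + M·∫₀ᵗ A(t−s)·f(s) ds. Then there exist T > 0 and C_T > 0, depending only on γ, K and M (and in particular not on f), such that f(t) ≤ C_T·A(t) for all t ∈ (0, T). -/
/-!
Weight by `s ^ γ`: `g s = s ^ γ * f s` is bounded on `(0, T)` by continuity. If `g ≤ B` there,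
then splitting `(0, t)` at `t / 2` gives
`(t - s) ^ (-γ) * s ^ (-γ) ≤ (t / 2) ^ (-γ) * (s ^ (-γ) + (t - s) ^ (-γ))`, whose integral is
explicit, so the hypothesis yields `g t ≤ K + c * t ^ (1 - γ) * B`.
For `T` so small that `c * T ^ (1 - γ) ≤ 1 / 2`, taking `B = sup g` absorbs the integral term
and gives `sup g ≤ 2 * K`.
-/

open MeasureTheory Set Filter Topology intervalIntegral

lemma exists_pos_forall_mul_rpow_lt (c : ℝ) {p ε : ℝ} (hp : 0 < p) (hε : 0 < ε) :
    ∃ T > 0, ∀ t ∈ Ioo 0 T, c * t ^ p < ε := by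
  have hlim : Tendsto (fun t : ℝ => c * t ^ p) (𝓝[>] 0) (𝓝 0) := by
    have := ((Real.continuousAt_rpow_const 0 p (Or.inr hp.le)).const_mul c).tendsto
    rw [Real.zero_rpow hp.ne', mul_zero] at this
    exact this.mono_left nhdsWithin_le_nhds
  exact (nhdsGT_basis 0).eventually_iff.1 (hlim.eventually (gt_mem_nhds hε))

lemma le_two_mul_of_forall_le_add_half {α : Type*} {S : Set α} {g : α → ℝ} {K : ℝ}
    (hK : 0 ≤ K) (hbdd : BddAbove (g '' S))
    (h : ∀ B, 0 ≤ B → (∀ x ∈ S, g x ≤ B) → ∀ x ∈ S, g x ≤ K + B / 2) :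
    ∀ x ∈ S, g x ≤ 2 * K := by
  set B := max (sSup (g '' S)) 0
  have hgB : ∀ x ∈ S, g x ≤ B := fun x hx =>
    (le_csSup hbdd (mem_image_of_mem g hx)).trans (le_max_left _ _)
  have hB0 : 0 ≤ B := le_max_right _ _
  have hstep := h B hB0 hgB
  have hB : B ≤ K + B / 2 :=
    max_le (Real.sSup_le (by rintro _ ⟨x, hx, rfl⟩; exact hstep x hx) (by positivity))
      (by positivity)
  intro x hx
  linarith [hgB x hx]

namespace Real

lemma rpow_neg_mul_rpow_neg_le {a b γ : ℝ} (ha : 0 < a) (hb : 0 < b) (hγ : 0 ≤ γ) :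
    a ^ (-γ) * b ^ (-γ) ≤ ((a + b) / 2) ^ (-γ) * (a ^ (-γ) + b ^ (-γ)) := by
  -- the larger of `a`, `b` is at least their mean
  wlog hab : a ≤ b generalizing a b
  · simpa only [add_comm, mul_comm] using this hb ha (le_of_not_ge hab)
  have hb' : b ^ (-γ) ≤ ((a + b) / 2) ^ (-γ) :=
    rpow_le_rpow_of_nonpos (by positivity) (by linarith) (by linarith)
  have := rpow_nonneg ha.le (-γ)
  have := rpow_nonneg hb.le (-γ)
  nlinarith

lemma intervalIntegrable_sub_rpow {r : ℝ} (hr : -1 < r) (t : ℝ) :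
    IntervalIntegrable (fun s => (t - s) ^ r) volume 0 t := by
  simpa using ((intervalIntegrable_rpow' hr (a := 0) (b := t)).comp_sub_left t).symm

lemma integral_rpow_add_sub_rpow {r t : ℝ} (hr : -1 < r) :
    ∫ s in 0..t, (s ^ r + (t - s) ^ r) = 2 * (t ^ (r + 1) / (r + 1)) := by
  have hpow : ∫ s in 0..t, s ^ r = t ^ (r + 1) / (r + 1) := by
    rw [integral_rpow (Or.inl hr), zero_rpow (by linarith), sub_zero]
  rw [integral_add (intervalIntegrable_rpow' hr) (intervalIntegrable_sub_rpow hr t),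
    integral_comp_sub_left (fun s => s ^ r), sub_self, sub_zero, hpow]
  ring

lemma integral_sub_rpow_neg_mul_le {γ t B : ℝ} {f : ℝ → ℝ} (hγ0 : 0 ≤ γ) (hγ1 : γ < 1)
    (ht : 0 < t) (hf : ContinuousOn f (Icc 0 t)) (hB0 : 0 ≤ B)
    (hB : ∀ s ∈ Ioo 0 t, s ^ γ * f s ≤ B) :
    ∫ s in 0..t, (t - s) ^ (-γ) * f s ≤ 2 ^ (1 + γ) / (1 - γ) * t ^ (1 - 2 * γ) * B := by
  have hr : -1 < -γ := by linarith
  have hmajorant : ∀ s ∈ Ioo 0 t,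
      (t - s) ^ (-γ) * f s ≤ B * ((t / 2) ^ (-γ) * (s ^ (-γ) + (t - s) ^ (-γ))) := by
    intro s ⟨hs0, hst⟩
    have hfs : f s ≤ s ^ (-γ) * B := by
      rw [rpow_neg hs0.le, ← div_eq_inv_mul, le_div_iff₀' (rpow_pos_of_pos hs0 γ)]
      exact hB s ⟨hs0, hst⟩
    calc (t - s) ^ (-γ) * f s ≤ (t - s) ^ (-γ) * (s ^ (-γ) * B) :=
          mul_le_mul_of_nonneg_left hfs (rpow_nonneg (by linarith) _)
      _ = B * (s ^ (-γ) * (t - s) ^ (-γ)) := by ring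
      _ ≤ B * ((t / 2) ^ (-γ) * (s ^ (-γ) + (t - s) ^ (-γ))) := by
          refine mul_le_mul_of_nonneg_left ?_ hB0
          simpa using rpow_neg_mul_rpow_neg_le hs0 (sub_pos.2 hst) hγ0
  have hfi : IntervalIntegrable (fun s => (t - s) ^ (-γ) * f s) volume 0 t :=
    (intervalIntegrable_sub_rpow hr t).mul_continuousOn (by rwa [uIcc_of_le ht.le])
  have hgi : IntervalIntegrable (fun s => B * ((t / 2) ^ (-γ) * (s ^ (-γ) + (t - s) ^ (-γ))))
      volume 0 t :=
    (((intervalIntegrable_rpow' hr).add (intervalIntegrable_sub_rpow hr t)).const_mul _).const_mul _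
  calc ∫ s in 0..t, (t - s) ^ (-γ) * f s
      ≤ ∫ s in 0..t, B * ((t / 2) ^ (-γ) * (s ^ (-γ) + (t - s) ^ (-γ))) :=
        integral_mono_on_of_le_Ioo ht.le hfi hgi hmajorant
    _ = 2 ^ (1 + γ) / (1 - γ) * t ^ (1 - 2 * γ) * B := by
        have hsplit : t ^ (1 - 2 * γ) = t ^ (-γ) * t ^ (-γ + 1) := by
          rw [← rpow_add ht]
          ring_nf
        rw [intervalIntegral.integral_const_mul, intervalIntegral.integral_const_mul,
          integral_rpow_add_sub_rpow hr, hsplit, div_rpow ht.le zero_le_two, rpow_add two_pos,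
          rpow_one, rpow_neg zero_le_two, neg_add_eq_sub]
        field_simp

end Real

lemma rpow_mul_le_of_le_add_integral {γ K M t B : ℝ} {f : ℝ → ℝ} (hγ0 : 0 ≤ γ) (hγ1 : γ < 1)
    (hK : 0 ≤ K) (hM : 0 ≤ M) (ht : 0 < t) (hf : ContinuousOn f (Icc 0 t)) (hB0 : 0 ≤ B)
    (hB : ∀ s ∈ Ioo 0 t, s ^ γ * f s ≤ B)
    (hft : f t ≤ K * t ^ (-γ) + M * ∫ s in 0..t, K * (t - s) ^ (-γ) * f s) :
    t ^ γ * f t ≤ K + M * K * (2 ^ (1 + γ) / (1 - γ)) * t ^ (1 - γ) * B := by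
  have hconv : ∫ s in 0..t, K * (t - s) ^ (-γ) * f s ≤
      K * (2 ^ (1 + γ) / (1 - γ) * t ^ (1 - 2 * γ) * B) := by
    simp_rw [mul_assoc K, intervalIntegral.integral_const_mul]
    exact mul_le_mul_of_nonneg_left
      (Real.integral_sub_rpow_neg_mul_le hγ0 hγ1 ht hf hB0 hB) hK
  have hcancel : t ^ γ * t ^ (-γ) = 1 := by
    rw [← Real.rpow_add ht, add_neg_cancel, Real.rpow_zero]
  have hexp : t ^ γ * t ^ (1 - 2 * γ) = t ^ (1 - γ) := by
    rw [← Real.rpow_add ht]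
    ring_nf
  calc t ^ γ * f t
      ≤ t ^ γ * (K * t ^ (-γ) + M * (K * (2 ^ (1 + γ) / (1 - γ) * t ^ (1 - 2 * γ) * B))) :=
        mul_le_mul_of_nonneg_left (hft.trans (by gcongr)) (Real.rpow_nonneg ht.le γ)
    _ = K * (t ^ γ * t ^ (-γ)) +
          M * K * (2 ^ (1 + γ) / (1 - γ)) * (t ^ γ * t ^ (1 - 2 * γ)) * B := by ring
    _ = K + M * K * (2 ^ (1 + γ) / (1 - γ)) * t ^ (1 - γ) * B := by rw [hcancel, hexp, mul_one]

/-- Singular-kernel Gronwall lemma (Lemma 2.6): if `f` is continuous on `[0,∞)` and satisfies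
`f t ≤ A t + M ∫₀ᵗ A (t-s) f s ds` with `A t = K t^(-γ)`, `γ ∈ (0,1)`, then `f t ≤ C_T A t`
on `(0, T)` for some `T, C_T > 0` depending only on `γ, K, M` (not on `f`). -/
theorem singular_gronwall (γ K M : ℝ) (hγ : γ ∈ Set.Ioo (0 : ℝ) 1) (hK : 0 < K) (hM : 0 < M) :
    ∃ T > (0 : ℝ), ∃ C > (0 : ℝ), ∀ f : ℝ → ℝ,
      ContinuousOn f (Set.Ici (0 : ℝ)) →
      (∀ t > (0 : ℝ), f t ≤ K * t ^ (-γ) + M * ∫ s in (0 : ℝ)..t, K * (t - s) ^ (-γ) * f s) →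
      ∀ t ∈ Set.Ioo (0 : ℝ) T, f t ≤ C * (K * t ^ (-γ)) := by
  obtain ⟨hγ0, hγ1⟩ := hγ
  obtain ⟨T, hT, hsmall⟩ := exists_pos_forall_mul_rpow_lt (M * K * (2 ^ (1 + γ) / (1 - γ)))
    (sub_pos.2 hγ1) one_half_pos
  refine ⟨T, hT, 2, two_pos, fun f hf hineq t ht => ?_⟩
  have hfT : ContinuousOn f (Icc 0 T) := hf.mono fun s hs => hs.1
  have hbdd : BddAbove ((fun s => s ^ γ * f s) '' Ioo 0 T) :=
    (isCompact_Icc.bddAbove_image ((continuousOn_id.rpow_const fun _ _ => Or.inr hγ0.le).mul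
      hfT)).mono (image_mono Ioo_subset_Icc_self)
  have hweighted := le_two_mul_of_forall_le_add_half hK.le hbdd fun B hB0 hB s hs =>
    calc s ^ γ * f s ≤ K + M * K * (2 ^ (1 + γ) / (1 - γ)) * s ^ (1 - γ) * B :=
          rpow_mul_le_of_le_add_integral hγ0.le hγ1 hK.le hM.le hs.1
            (hfT.mono (Icc_subset_Icc_right hs.2.le)) hB0
            (fun r hr => hB r ⟨hr.1, hr.2.trans hs.2⟩) (hineq s hs.1)
      _ ≤ K + B / 2 := by nlinarith [hsmall s hs]
  calc f t = t ^ (-γ) * (t ^ γ * f t) := by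
        rw [← mul_assoc, ← Real.rpow_add ht.1, neg_add_cancel, Real.rpow_zero, one_mul]
    _ ≤ t ^ (-γ) * (2 * K) :=
        mul_le_mul_of_nonneg_left (hweighted t ht) (Real.rpow_nonneg ht.1.le _)
    _ = 2 * (K * t ^ (-γ)) := by ring
end

section
/- Let X be a nonzero complex Banach space, T : X → X a continuous linear operator, and z₀ ∈ σ(T) an isolated point of the spectrum, i.e. there is ε₀ > 0 such that σ(T) ∩ {z ∈ ℂ : |z − z₀| ≤ ε₀} = {z₀}. Then for every ε ∈ (0, ε₀] there exists δ > 0 such that every continuous linear operator S : X → X with ‖S − T‖ < δ has a spectral point near z₀: there exists z ∈ σ(S) with |z − z₀| < ε. -/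
/-!
If no spectral point of `S` lay within `ε` of `z₀`, the resolvent of `S` would be holomorphic on
the closed disc. On the boundary circle it is uniformly close to the resolvent of `T`, which is
bounded there by some `M` (the circle misses `σ(T)` and is compact), so `‖R_S‖ ≤ 2M` on the
circle, and by the maximum modulus principle also at `z₀`. But then `z₀ - T`, a perturbation of
the invertible `z₀ - S` by `S - T` with `‖S - T‖ < 1 / (2M)`, is invertible, contradicting
`z₀ ∈ σ(T)`.
-/

open Metric Set

theorem isUnit_sub_and_norm_inverse_sub_le {R : Type*} [NormedRing R] [HasSummableGeomSeries R]
    [NormOneClass R] {u d : R} {M : ℝ} (hu : IsUnit u) (hM : ‖Ring.inverse u‖ ≤ M)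
    (hd : M * ‖d‖ < 1) :
    IsUnit (u - d) ∧ ‖Ring.inverse (u - d)‖ ≤ M / (1 - M * ‖d‖) := by
  obtain ⟨u, rfl⟩ := hu
  rw [Ring.inverse_unit] at hM
  set t := ((u⁻¹ : Rˣ) : R) * d
  have ht : ‖t‖ ≤ M * ‖d‖ := (norm_mul_le _ _).trans (by gcongr)
  have ht1 : ‖t‖ < 1 := ht.trans_lt hd
  have hfactor : (u : R) - d = ((u * Units.oneSub t ht1 : Rˣ) : R) := by
    simp [t, mul_sub, ← mul_assoc]
  refine ⟨hfactor ▸ Units.isUnit _, ?_⟩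
  have hgeom : ‖(((Units.oneSub t ht1)⁻¹ : Rˣ) : R)‖ ≤ (1 - ‖t‖)⁻¹ := by
    change ‖∑' n : ℕ, t ^ n‖ ≤ _
    simpa using tsum_geometric_le_of_norm_lt_one t ht1
  rw [hfactor, Ring.inverse_unit, mul_inv_rev, Units.val_mul, div_eq_inv_mul]
  have hM0 : 0 ≤ M := (norm_nonneg _).trans hM
  have ht0 : 0 < 1 - ‖t‖ := by linarith
  calc ‖(((Units.oneSub t ht1)⁻¹ : Rˣ) : R) * ((u⁻¹ : Rˣ) : R)‖
      ≤ ‖(((Units.oneSub t ht1)⁻¹ : Rˣ) : R)‖ * ‖((u⁻¹ : Rˣ) : R)‖ := norm_mul_le _ _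
    _ ≤ (1 - ‖t‖)⁻¹ * M := by gcongr
    _ ≤ (1 - M * ‖d‖)⁻¹ * M := by gcongr

section resolvent

variable {A : Type*} [NormedRing A]

theorem mem_resolventSet_and_norm_resolvent_le {𝕜 : Type*} [CommSemiring 𝕜] [Algebra 𝕜 A]
    [HasSummableGeomSeries A] [NormOneClass A] {a b : A} {z : 𝕜} {M : ℝ}
    (hz : z ∈ resolventSet 𝕜 a) (hM : ‖resolvent a z‖ ≤ M) (hab : M * ‖b - a‖ < 1) :
    z ∈ resolventSet 𝕜 b ∧ ‖resolvent b z‖ ≤ M / (1 - M * ‖b - a‖) := by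
  have hsub : algebraMap 𝕜 A z - b = (algebraMap 𝕜 A z - a) - (b - a) := by abel
  rw [spectrum.mem_resolventSet_iff, resolvent, hsub]
  exact isUnit_sub_and_norm_inverse_sub_le hz hM hab

variable [NormedAlgebra ℂ A] [CompleteSpace A]

theorem norm_resolvent_le_of_forall_mem_sphere {a : A} {z₀ z : ℂ} {ε C : ℝ} (hε : 0 < ε)
    (hball : closedBall z₀ ε ⊆ resolventSet ℂ a)
    (hC : ∀ w ∈ sphere z₀ ε, ‖resolvent a w‖ ≤ C) (hz : z ∈ closedBall z₀ ε) :
    ‖resolvent a z‖ ≤ C := by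
  have hdiff : DiffContOnCl ℂ (resolvent a) (ball z₀ ε) := by
    refine DifferentiableOn.diffContOnCl fun w hw ↦ ?_
    rw [closure_ball z₀ hε.ne'] at hw
    exact (spectrum.hasDerivAt_resolvent_const_left (hball hw)).differentiableAt
      |>.differentiableWithinAt
  refine Complex.norm_le_of_forall_mem_frontier_norm_le isBounded_ball hdiff ?_
    (by rwa [closure_ball z₀ hε.ne'])
  rwa [frontier_ball z₀ hε.ne']

theorem IsCompact.exists_pos_forall_norm_resolvent_le {K : Set ℂ} (hK : IsCompact K) {a : A}
    (hKa : K ⊆ resolventSet ℂ a) : ∃ M > (0 : ℝ), ∀ z ∈ K, ‖resolvent a z‖ ≤ M := by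
  have hcont : ContinuousOn (resolvent a) K := fun z hz ↦
    (spectrum.hasDerivAt_resolvent_const_left (hKa hz)).continuousAt.continuousWithinAt
  obtain ⟨C, hC⟩ := hK.exists_bound_of_continuousOn hcont
  exact ⟨max C 1, by positivity, fun z hz ↦ (hC z hz).trans (le_max_left _ _)⟩

variable [NormOneClass A]

theorem exists_pos_forall_spectrum_inter_ball_nonempty {a : A} {z₀ : ℂ} {ε : ℝ} (hε : 0 < ε)
    (hz₀ : z₀ ∈ spectrum ℂ a) (hsphere : sphere z₀ ε ⊆ resolventSet ℂ a) :
    ∃ δ > (0 : ℝ), ∀ b : A, ‖b - a‖ < δ → (spectrum ℂ b ∩ ball z₀ ε).Nonempty := by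
  obtain ⟨M, hM, hMa⟩ := (isCompact_sphere z₀ ε).exists_pos_forall_norm_resolvent_le hsphere
  refine ⟨(2 * M)⁻¹, by positivity, fun b hb ↦ ?_⟩
  have hbM : 2 * M * ‖b - a‖ < 1 := by
    rwa [← lt_inv_mul_iff₀ (by positivity), mul_one]
  have hsphere_b : ∀ z ∈ sphere z₀ ε, z ∈ resolventSet ℂ b ∧ ‖resolvent b z‖ ≤ 2 * M := by
    intro z hz
    obtain ⟨hzb, hbound⟩ := mem_resolventSet_and_norm_resolvent_le (hsphere hz) (hMa z hz)
      (by linarith)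
    refine ⟨hzb, hbound.trans ?_⟩
    rw [div_le_iff₀ (by linarith)]
    nlinarith
  by_contra hempty
  have hball : closedBall z₀ ε ⊆ resolventSet ℂ b := by
    rw [← ball_union_sphere]
    rintro z (hz | hz)
    · by_contra hzσ
      exact hempty ⟨z, hzσ, hz⟩
    · exact (hsphere_b z hz).1
  have hz₀b : ‖resolvent b z₀‖ ≤ 2 * M := norm_resolvent_le_of_forall_mem_sphere hε hball
    (fun z hz ↦ (hsphere_b z hz).2) (mem_closedBall_self hε.le)
  exact hz₀ (mem_resolventSet_and_norm_resolvent_le (hball (mem_closedBall_self hε.le)) hz₀b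
    (by rwa [norm_sub_rev])).1

end resolvent

theorem spectrum_lower_semicontinuous_at_isolated_point_general
    {X : Type*} [NormedAddCommGroup X] [NormedSpace ℂ X] [CompleteSpace X]
    (T : X →L[ℂ] X) (z₀ : ℂ) (hz₀ : z₀ ∈ spectrum ℂ T)
    (ε₀ : ℝ)
    (hiso : spectrum ℂ T ∩ Metric.closedBall z₀ ε₀ = {z₀}) :
    ∀ ε : ℝ, 0 < ε → ε ≤ ε₀ →
      ∃ δ > (0 : ℝ), ∀ S : X →L[ℂ] X, ‖S - T‖ < δ →
        ∃ z ∈ spectrum ℂ S, ‖z - z₀‖ < ε := by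
  intro ε hε hεε₀
  -- for `‖1‖ = 1` in `X →L[ℂ] X`
  have : Nontrivial X := by
    by_contra hX
    rw [not_nontrivial_iff_subsingleton] at hX
    simp [spectrum.of_subsingleton] at hz₀
  have hsphere : sphere z₀ ε ⊆ resolventSet ℂ T := by
    intro z hz
    by_contra hzσ
    have hz_eq : z = z₀ := by
      rw [← mem_singleton_iff, ← hiso]
      exact ⟨hzσ, (mem_sphere.mp hz).trans_le hεε₀⟩
    simp [hz_eq, hε.ne] at hz
  obtain ⟨δ, hδ, hS⟩ := exists_pos_forall_spectrum_inter_ball_nonempty hε hz₀ hsphere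
  refine ⟨δ, hδ, fun S hST ↦ ?_⟩
  obtain ⟨z, hzσ, hz⟩ := hS S hST
  exact ⟨z, hzσ, mem_ball_iff_norm.mp hz⟩

/-- Lower semicontinuity of the spectrum at an isolated spectral point (key spectral
perturbation step in Propositions 2.8 and 4.1): if `z₀` is an isolated point of `σ(T)`,
then every operator `S` sufficiently close to `T` in operator norm has a spectral point
within `ε` of `z₀`. -/
theorem spectrum_lower_semicontinuous_at_isolated_point
    {X : Type*} [NormedAddCommGroup X] [NormedSpace ℂ X] [CompleteSpace X] [Nontrivial X]
    (T : X →L[ℂ] X) (z₀ : ℂ) (hz₀ : z₀ ∈ spectrum ℂ T)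
    (ε₀ : ℝ) (hε₀ : 0 < ε₀)
    (hiso : spectrum ℂ T ∩ Metric.closedBall z₀ ε₀ = {z₀}) :
    ∀ ε : ℝ, 0 < ε → ε ≤ ε₀ →
      ∃ δ > (0 : ℝ), ∀ S : X →L[ℂ] X, ‖S - T‖ < δ →
        ∃ z ∈ spectrum ℂ S, ‖z - z₀‖ < ε :=
  spectrum_lower_semicontinuous_at_isolated_point_general T z₀ hz₀ ε₀ hiso
end

section
/- Let d ≥ 1, K ≥ 0 and R > K. Let g ∈ L²(ℝ^d, ℝ) and let u₀ ∈ L¹(ℝ^d, ℝ) vanish almost everywhere outside the closed ball {y : ‖y‖ ≤ K}. Then the convolution g ⋆ u₀ ∈ L²(ℝ^d) satisfies the tail estimate ( ∫_{‖x‖ > R} |(g ⋆ u₀)(x)|² dx )^{1/2} ≤ ( ∫_{‖z‖ > R − K} |g(z)|² dz )^{1/2} · ‖u₀‖_{L¹}. -/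
/-! Weighting Cauchy–Schwarz by `|u₀|` gives
`|(g ⋆ u₀)(x)|² ≤ (∫ |g (x - y)|² |u₀ y| dy) ‖u₀‖₁`; integrating in `x` (Tonelli and translation
invariance) yields Young's inequality `‖g ⋆ u₀‖₂ ≤ ‖g‖₂ ‖u₀‖₁`. For `‖x‖ > R` and `y` in the
support of `u₀` we have `‖x - y‖ ≥ ‖x‖ - ‖y‖ > R - K`, so on `{‖x‖ > R}` the convolution
`g ⋆ u₀` agrees with `(1_{‖z‖ > R - K} g) ⋆ u₀`, to which Young's inequality applies. -/

open MeasureTheory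
open scoped ENNReal

theorem ENNReal.sq_lintegral_mul_le {α : Type*} [MeasurableSpace α] {μ : Measure α}
    {F U : α → ℝ≥0∞} (hF : AEMeasurable F μ) (hU : AEMeasurable U μ) :
    (∫⁻ a, F a * U a ∂μ) ^ 2 ≤ (∫⁻ a, F a ^ 2 * U a ∂μ) * ∫⁻ a, U a ∂μ := by
  have hCS := ENNReal.lintegral_mul_norm_pow_le ((hF.pow_const 2).mul hU) hU
    (p := 1 / 2) (q := 1 / 2) (by norm_num) (by norm_num) (by norm_num)
  have hsplit : ∀ a, (F a ^ 2 * U a) ^ (1 / 2 : ℝ) * U a ^ (1 / 2 : ℝ) = F a * U a := by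
    intro a
    rw [ENNReal.mul_rpow_of_nonneg _ _ (by norm_num), mul_assoc,
      ← ENNReal.rpow_add_of_nonneg _ _ (by norm_num) (by norm_num), ← ENNReal.rpow_natCast,
      ← ENNReal.rpow_mul]
    norm_num
  simp only [Pi.mul_apply, hsplit] at hCS
  calc (∫⁻ a, F a * U a ∂μ) ^ 2
      ≤ ((∫⁻ a, F a ^ 2 * U a ∂μ) ^ (1 / 2 : ℝ) * (∫⁻ a, U a ∂μ) ^ (1 / 2 : ℝ)) ^ 2 :=
        pow_le_pow_left' hCS 2
    _ = (∫⁻ a, F a ^ 2 * U a ∂μ) * ∫⁻ a, U a ∂μ := by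
        rw [mul_pow, ← ENNReal.rpow_natCast, ← ENNReal.rpow_natCast, ← ENNReal.rpow_mul,
          ← ENNReal.rpow_mul]
        norm_num

namespace MeasureTheory

theorem eLpNorm_two_sq_eq_lintegral {α E : Type*} [MeasurableSpace α] {μ : Measure α} [ENorm E]
    (f : α → E) : eLpNorm f 2 μ ^ 2 = ∫⁻ x, ‖f x‖ₑ ^ 2 ∂μ := by
  simpa using eLpNorm_nnreal_pow_eq_lintegral (f := f) (μ := μ) (p := 2) two_ne_zero

section Group

variable {G : Type*} [AddGroup G] [MeasurableSpace G] [MeasurableAdd₂ G] [MeasurableNeg G]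
  {μ : Measure G} [SFinite μ] [μ.IsAddRightInvariant]

theorem lintegral_sq_convolution_le {F U : G → ℝ≥0∞} (hF : AEMeasurable F μ)
    (hU : AEMeasurable U μ) :
    ∫⁻ x, (∫⁻ y, F (x - y) * U y ∂μ) ^ 2 ∂μ ≤ (∫⁻ z, F z ^ 2 ∂μ) * (∫⁻ y, U y ∂μ) ^ 2 := by
  have hFsub : AEMeasurable (fun p : G × G => F (p.1 - p.2)) (μ.prod μ) :=
    hF.comp_quasiMeasurePreserving (quasiMeasurePreserving_sub_of_right_invariant μ μ)
  have hUsnd : AEMeasurable (fun p : G × G => U p.2) (μ.prod μ) :=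
    hU.comp_quasiMeasurePreserving Measure.quasiMeasurePreserving_snd
  have hweight : AEMeasurable (fun p : G × G => F (p.1 - p.2) ^ 2 * U p.2) (μ.prod μ) :=
    (hFsub.pow_const 2).mul hUsnd
  have hsections : ∀ᵐ x ∂μ, AEMeasurable (fun y => F (x - y)) μ :=
    hFsub.aestronglyMeasurable.prodMk_left.mono fun _ h => h.aemeasurable
  have hpointwise : ∀ᵐ x ∂μ, (∫⁻ y, F (x - y) * U y ∂μ) ^ 2 ≤
      (∫⁻ y, F (x - y) ^ 2 * U y ∂μ) * ∫⁻ y, U y ∂μ :=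
    hsections.mono fun _ hx => ENNReal.sq_lintegral_mul_le hx hU
  have htranslate : ∀ y, ∫⁻ x, F (x - y) ^ 2 ∂μ = ∫⁻ z, F z ^ 2 ∂μ :=
    lintegral_sub_right_eq_self (fun z => F z ^ 2)
  calc ∫⁻ x, (∫⁻ y, F (x - y) * U y ∂μ) ^ 2 ∂μ
      ≤ ∫⁻ x, (∫⁻ y, F (x - y) ^ 2 * U y ∂μ) * ∫⁻ y, U y ∂μ ∂μ := lintegral_mono_ae hpointwise
    _ = (∫⁻ y, ∫⁻ x, F (x - y) ^ 2 * U y ∂μ ∂μ) * ∫⁻ y, U y ∂μ := by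
        rw [lintegral_mul_const'' _ hweight.lintegral_prod_right', lintegral_lintegral_swap hweight]
    _ = (∫⁻ z, F z ^ 2 ∂μ) * (∫⁻ y, U y ∂μ) ^ 2 := by
        have hshift : ∀ y, AEMeasurable (fun x => F (x - y) ^ 2) μ := fun y =>
          (hF.comp_quasiMeasurePreserving
            (measurePreserving_sub_right μ y).quasiMeasurePreserving).pow_const 2
        simp_rw [lintegral_mul_const'' _ (hshift _), htranslate]
        rw [lintegral_const_mul'' _ hU, sq, mul_assoc]

theorem eLpNorm_two_convolution_le {g u : G → ℝ} (hg : AEStronglyMeasurable g μ)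
    (hu : AEStronglyMeasurable u μ) :
    eLpNorm (fun x => ∫ y, g (x - y) * u y ∂μ) 2 μ ≤ eLpNorm g 2 μ * eLpNorm u 1 μ := by
  rw [← ENNReal.pow_le_pow_left_iff two_ne_zero, mul_pow, eLpNorm_two_sq_eq_lintegral,
    eLpNorm_two_sq_eq_lintegral, eLpNorm_one_eq_lintegral_enorm]
  calc ∫⁻ x, ‖∫ y, g (x - y) * u y ∂μ‖ₑ ^ 2 ∂μ
      ≤ ∫⁻ x, (∫⁻ y, ‖g (x - y)‖ₑ * ‖u y‖ₑ ∂μ) ^ 2 ∂μ := by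
        refine lintegral_mono fun x => pow_le_pow_left' ?_ 2
        simpa only [enorm_mul] using enorm_integral_le_lintegral_enorm (fun y => g (x - y) * u y)
    _ ≤ _ := lintegral_sq_convolution_le hg.enorm hu.enorm

theorem aestronglyMeasurable_convolution {g u : G → ℝ} (hg : AEStronglyMeasurable g μ)
    (hu : AEStronglyMeasurable u μ) :
    AEStronglyMeasurable (fun x => ∫ y, g (x - y) * u y ∂μ) μ :=
  ((hg.comp_quasiMeasurePreserving (quasiMeasurePreserving_sub_of_right_invariant μ μ)).mul
    (hu.comp_quasiMeasurePreserving Measure.quasiMeasurePreserving_snd)).integral_prod_right'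

theorem MemLp.convolution {g u : G → ℝ} (hg : MemLp g 2 μ) (hu : Integrable u μ) :
    MemLp (fun x => ∫ y, g (x - y) * u y ∂μ) 2 μ :=
  ⟨aestronglyMeasurable_convolution hg.1 hu.1, (eLpNorm_two_convolution_le hg.1 hu.1).trans_lt
    (ENNReal.mul_lt_top hg.2 (memLp_one_iff_integrable.2 hu).2)⟩

end Group

theorem convolution_eq_convolution_indicator {G : Type*} [SeminormedAddCommGroup G]
    [MeasurableSpace G] {μ : Measure G} {g u : G → ℝ} {K R : ℝ}
    (hu : ∀ᵐ y ∂μ, y ∉ Metric.closedBall 0 K → u y = 0) {x : G} (hx : R < ‖x‖) :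
    ∫ y, g (x - y) * u y ∂μ = ∫ y, {z : G | R - K < ‖z‖}.indicator g (x - y) * u y ∂μ := by
  refine integral_congr_ae ?_
  filter_upwards [hu] with y hy
  by_cases hyK : ‖y‖ ≤ K
  · have hxy : R - K < ‖x - y‖ := by linarith [norm_sub_norm_le x y]
    rw [Set.indicator_of_mem (s := {z : G | R - K < ‖z‖}) hxy]
  · rw [hy (by simpa using hyK), mul_zero, mul_zero]

section Normed

variable {G : Type*} [SeminormedAddCommGroup G] [MeasurableSpace G] [OpensMeasurableSpace G]
  [MeasurableAdd₂ G] [MeasurableNeg G] {μ : Measure G} [SFinite μ] [μ.IsAddRightInvariant]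

theorem eLpNorm_two_convolution_tail_le {g u : G → ℝ} (hg : AEStronglyMeasurable g μ)
    (hu : AEStronglyMeasurable u μ) {K R : ℝ}
    (hsupp : ∀ᵐ y ∂μ, y ∉ Metric.closedBall 0 K → u y = 0) :
    eLpNorm (fun x => ∫ y, g (x - y) * u y ∂μ) 2 (μ.restrict {x | R < ‖x‖}) ≤
      eLpNorm g 2 (μ.restrict {z | R - K < ‖z‖}) * eLpNorm u 1 μ := by
  have hS : MeasurableSet {z : G | R - K < ‖z‖} :=
    measurableSet_lt measurable_const continuous_norm.measurable
  have hT : MeasurableSet {x : G | R < ‖x‖} :=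
    measurableSet_lt measurable_const continuous_norm.measurable
  calc eLpNorm (fun x => ∫ y, g (x - y) * u y ∂μ) 2 (μ.restrict {x | R < ‖x‖})
      = eLpNorm (fun x => ∫ y, {z : G | R - K < ‖z‖}.indicator g (x - y) * u y ∂μ) 2
          (μ.restrict {x | R < ‖x‖}) :=
        eLpNorm_congr_ae (ae_restrict_of_forall_mem hT
          fun _ hx => convolution_eq_convolution_indicator hsupp hx)
    _ ≤ eLpNorm (fun x => ∫ y, {z : G | R - K < ‖z‖}.indicator g (x - y) * u y ∂μ) 2 μ :=
        eLpNorm_mono_measure _ Measure.restrict_le_self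
    _ ≤ eLpNorm ({z : G | R - K < ‖z‖}.indicator g) 2 μ * eLpNorm u 1 μ :=
        eLpNorm_two_convolution_le (hg.indicator hS) hu
    _ = eLpNorm g 2 (μ.restrict {z | R - K < ‖z‖}) * eLpNorm u 1 μ := by
        rw [eLpNorm_indicator_eq_eLpNorm_restrict hS]

end Normed

theorem sqrt_integral_sq_eq_lpNorm {α : Type*} [MeasurableSpace α] {μ : Measure α} {f : α → ℝ}
    (hf : AEStronglyMeasurable f μ) : √(∫ x, f x ^ 2 ∂μ) = lpNorm f 2 μ := by
  rw [lpNorm_eq_integral_norm_rpow_toReal two_ne_zero ENNReal.ofNat_ne_top hf, Real.sqrt_eq_rpow]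
  simp [Real.norm_eq_abs, sq_abs]

end MeasureTheory

theorem convolution_tail_estimate_general
    (d : ℕ) (K R : ℝ)
    (g u₀ : EuclideanSpace ℝ (Fin d) → ℝ)
    (hg : MemLp g 2 (volume : Measure (EuclideanSpace ℝ (Fin d))))
    (hu₀ : Integrable u₀ (volume : Measure (EuclideanSpace ℝ (Fin d))))
    (hsupp : ∀ᵐ y ∂(volume : Measure (EuclideanSpace ℝ (Fin d))),
      y ∉ Metric.closedBall (0 : EuclideanSpace ℝ (Fin d)) K → u₀ y = 0) :
    MemLp (fun x => ∫ y, g (x - y) * u₀ y) 2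
        (volume : Measure (EuclideanSpace ℝ (Fin d))) ∧
    Real.sqrt (∫ x in {x : EuclideanSpace ℝ (Fin d) | R < ‖x‖},
        (∫ y, g (x - y) * u₀ y) ^ 2) ≤
      Real.sqrt (∫ z in {z : EuclideanSpace ℝ (Fin d) | R - K < ‖z‖}, (g z) ^ 2) *
        ∫ y, |u₀ y| := by
  have hconv := hg.convolution hu₀
  refine ⟨hconv, ?_⟩
  simp_rw [← Real.norm_eq_abs]
  rw [sqrt_integral_sq_eq_lpNorm hconv.1.restrict, sqrt_integral_sq_eq_lpNorm hg.1.restrict,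
    ← lpNorm_one_eq_integral_norm hu₀.1, ← toReal_eLpNorm hconv.1.restrict,
    ← toReal_eLpNorm hg.1.restrict, ← toReal_eLpNorm hu₀.1, ← ENNReal.toReal_mul]
  exact ENNReal.toReal_mono
    (ENNReal.mul_ne_top (hg.restrict _).eLpNorm_ne_top
      (memLp_one_iff_integrable.2 hu₀).eLpNorm_ne_top)
    (eLpNorm_two_convolution_tail_le hg.1 hu₀.1 hsupp)

/-- Localized Young-type tail estimate for the convolution (used in the proof of
Proposition 2.5): if `g ∈ L²(ℝ^d)` and `u₀ ∈ L¹(ℝ^d)` is supported (a.e.) in the closed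
ball of radius `K`, then for `R > K`,
`‖g ⋆ u₀‖_{L²({‖x‖ > R})} ≤ ‖g‖_{L²({‖z‖ > R−K})} · ‖u₀‖_{L¹}`;
moreover `g ⋆ u₀ ∈ L²(ℝ^d)`. -/
theorem convolution_tail_estimate
    (d : ℕ) (hd : 1 ≤ d) (K R : ℝ) (hK : 0 ≤ K) (hR : K < R)
    (g u₀ : EuclideanSpace ℝ (Fin d) → ℝ)
    (hg : MemLp g 2 (volume : Measure (EuclideanSpace ℝ (Fin d))))
    (hu₀ : Integrable u₀ (volume : Measure (EuclideanSpace ℝ (Fin d))))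
    (hsupp : ∀ᵐ y ∂(volume : Measure (EuclideanSpace ℝ (Fin d))),
      y ∉ Metric.closedBall (0 : EuclideanSpace ℝ (Fin d)) K → u₀ y = 0) :
    MemLp (fun x => ∫ y, g (x - y) * u₀ y) 2
        (volume : Measure (EuclideanSpace ℝ (Fin d))) ∧
    Real.sqrt (∫ x in {x : EuclideanSpace ℝ (Fin d) | R < ‖x‖},
        (∫ y, g (x - y) * u₀ y) ^ 2) ≤
      Real.sqrt (∫ z in {z : EuclideanSpace ℝ (Fin d) | R - K < ‖z‖}, (g z) ^ 2) *
        ∫ y, |u₀ y| :=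
  convolution_tail_estimate_general d K R g u₀ hg hu₀ hsupp
end
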